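/- Suppose $R$ is reduced, $k(Y) = \langle 0 \rangle$, and $R$ satisfies property $A$ (every finitely generated ideal of $R$ consisting entirely of zero-divisors has a nonzero annihilator). Then every ideal $I$ of $R$ all of whose elements are zero-divisors is contained in a proper strong $\mathcal{H}_Y$-ideal of $R$ (and hence in a proper $\mathcal{H}_Y$-ideal). -/

import Mathlib

/-!
Let `I` consist of zero-divisors and let `J` be the set of those `b` for which some finite
`F ⊆ I` satisfies `h_Y(F) ⊆ h_Y(b)`. This is the smallest strong `ℋ_Y`-ideal containing `I`.
If `1 ∈ J`, then `h_Y(F) = ∅` for some finite `F ⊆ I`. But the ideal generated by `F` is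
finitely generated and consists of zero-divisors, so property `A` gives `c ≠ 0` with `F c = 0`;
as `k(Y) = 0` some `P ∈ Y` misses `c`, and being prime it then contains `F`, i.e. `P ∈ h_Y(F)`.
-/

/-- `hSet Y S` is the set of primes (ideals) in `Y` containing the subset `S`. -/
def hSet {R : Type*} [CommRing R] (Y : Set (Ideal R)) (S : Set R) : Set (Ideal R) :=
  {P ∈ Y | S ⊆ (P : Set R)}

/-- `kSet 𝒮` is the intersection of the ideals in `𝒮` (the whole ring if `𝒮 = ∅`). -/
def kSet {R : Type*} [CommRing R] (𝒮 : Set (Ideal R)) : Ideal R := sInf 𝒮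

/-- An `ℋ_Y`-ideal. -/
def IsHIdeal {R : Type*} [CommRing R] (Y : Set (Ideal R)) (I : Ideal R) : Prop :=
  ∀ a ∈ I, ∀ b : R, hSet Y {a} ⊆ hSet Y {b} → b ∈ I

/-- A strong `ℋ_Y`-ideal. -/
def IsStrongHIdeal {R : Type*} [CommRing R] (Y : Set (Ideal R)) (I : Ideal R) : Prop :=
  ∀ F : Set R, F.Finite → F ⊆ (I : Set R) → ∀ b : R, hSet Y F ⊆ hSet Y {b} → b ∈ I

/-- A `Y`-Hilbert ideal. -/
def IsYHilbert {R : Type*} [CommRing R] (Y : Set (Ideal R)) (I : Ideal R) : Prop :=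
  I = kSet (hSet Y (I : Set R))

section HIdeals

variable {R : Type*} [CommRing R] {Y : Set (Ideal R)}

lemma hSet_anti {S T : Set R} (h : S ⊆ T) : hSet Y T ⊆ hSet Y S :=
  fun _ hP => ⟨hP.1, h.trans hP.2⟩

@[simp]
lemma mem_hSet_singleton {P : Ideal R} {b : R} : P ∈ hSet Y {b} ↔ P ∈ Y ∧ b ∈ P := by
  simp [hSet]

lemma hSet_singleton_one (hY : ∀ P ∈ Y, P.IsPrime) : hSet Y {1} = ∅ :=
  Set.eq_empty_of_forall_notMem fun P hP =>
    (hY P (mem_hSet_singleton.1 hP).1).ne_top <|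
      (Ideal.eq_top_iff_one P).2 (mem_hSet_singleton.1 hP).2

lemma hSet_nonempty_of_mul_eq_zero (hY : ∀ P ∈ Y, P.IsPrime) (hk : kSet Y = ⊥)
    {F : Set R} {c : R} (hc : c ≠ 0) (hFc : ∀ a ∈ F, a * c = 0) : (hSet Y F).Nonempty := by
  obtain ⟨P, hPY, hcP⟩ : ∃ P ∈ Y, c ∉ P := by
    by_contra! h
    exact hc <| (Submodule.mem_bot R).1 <| hk ▸ Submodule.mem_sInf.2 h
  refine ⟨P, hPY, fun a ha => ?_⟩
  have hac : a * c ∈ P := (hFc a ha).symm ▸ P.zero_mem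
  exact ((hY P hPY).mem_or_mem hac).resolve_right hcP

lemma IsStrongHIdeal.isHIdeal {J : Ideal R} (hJ : IsStrongHIdeal Y J) : IsHIdeal Y J :=
  fun a ha => hJ {a} (Set.finite_singleton a) (Set.singleton_subset_iff.2 ha)

variable (Y) in
def hClosure (S : Set R) : Ideal R where
  carrier := {b | ∃ F : Set R, F.Finite ∧ F ⊆ S ∧ hSet Y F ⊆ hSet Y {b}}
  zero_mem' := ⟨∅, Set.finite_empty, Set.empty_subset S, fun P hP =>
    mem_hSet_singleton.2 ⟨hP.1, P.zero_mem⟩⟩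
  add_mem' := by
    rintro a b ⟨F, hF, hFS, hFa⟩ ⟨G, hG, hGS, hGb⟩
    refine ⟨F ∪ G, hF.union hG, Set.union_subset hFS hGS, fun P hP => ?_⟩
    have ha := mem_hSet_singleton.1 (hFa (hSet_anti Set.subset_union_left hP))
    have hb := mem_hSet_singleton.1 (hGb (hSet_anti Set.subset_union_right hP))
    exact mem_hSet_singleton.2 ⟨hP.1, P.add_mem ha.2 hb.2⟩
  smul_mem' := by
    rintro r b ⟨F, hF, hFS, hFb⟩
    refine ⟨F, hF, hFS, fun P hP => ?_⟩
    exact mem_hSet_singleton.2 ⟨hP.1, P.mul_mem_left r (mem_hSet_singleton.1 (hFb hP)).2⟩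

lemma mem_hClosure {S : Set R} {b : R} :
    b ∈ hClosure Y S ↔ ∃ F : Set R, F.Finite ∧ F ⊆ S ∧ hSet Y F ⊆ hSet Y {b} :=
  Iff.rfl

lemma subset_hClosure (S : Set R) : S ⊆ hClosure Y S :=
  fun a ha => ⟨{a}, Set.finite_singleton a, Set.singleton_subset_iff.2 ha, subset_rfl⟩

lemma isStrongHIdeal_hClosure (S : Set R) : IsStrongHIdeal Y (hClosure Y S) := by
  intro F hF hFJ b hFb
  have : Finite F := hF
  choose G hG hGS hGf using fun f : F => mem_hClosure.1 (hFJ f.2)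
  refine ⟨⋃ f, G f, Set.finite_iUnion hG, Set.iUnion_subset hGS, fun P hP => hFb ⟨hP.1, ?_⟩⟩
  intro f hf
  exact (mem_hSet_singleton.1 (hGf ⟨f, hf⟩ (hSet_anti (Set.subset_iUnion G ⟨f, hf⟩) hP))).2

lemma hClosure_ne_top (hY : ∀ P ∈ Y, P.IsPrime) (hk : kSet Y = ⊥)
    (hA : ∀ J : Ideal R, J.FG → (∀ a ∈ J, ∃ b : R, b ≠ 0 ∧ a * b = 0) →
      ∃ c : R, c ≠ 0 ∧ ∀ a ∈ J, a * c = 0)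
    {I : Ideal R} (hI : ∀ a ∈ I, ∃ b : R, b ≠ 0 ∧ a * b = 0) :
    hClosure Y (I : Set R) ≠ ⊤ := by
  intro htop
  obtain ⟨F, hF, hFI, hF1⟩ := mem_hClosure.1 (htop ▸ Submodule.mem_top : (1 : R) ∈ _)
  obtain ⟨c, hc, hFc⟩ := hA (Ideal.span F) ⟨hF.toFinset, by simp⟩
    fun a ha => hI a (Ideal.span_le.2 hFI ha)
  obtain ⟨P, hP⟩ := hSet_nonempty_of_mul_eq_zero hY hk hc
    fun a ha => hFc a (Ideal.subset_span ha)
  exact (hSet_singleton_one hY ▸ hF1 hP : P ∈ (∅ : Set (Ideal R)))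

end HIdeals

theorem stmt18_general {R : Type*} [CommRing R] (Y : Set (Ideal R))
    (hprime : ∀ P ∈ Y, P.IsPrime) (h0 : kSet Y = ⊥)
    (hA : ∀ J : Ideal R, J.FG → (∀ a ∈ J, ∃ b : R, b ≠ 0 ∧ a * b = 0) →
      ∃ c : R, c ≠ 0 ∧ ∀ a ∈ J, a * c = 0)
    (I : Ideal R) (hsing : ∀ a ∈ I, ∃ b : R, b ≠ 0 ∧ a * b = 0) :
    ∃ J : Ideal R, J ≠ ⊤ ∧ IsStrongHIdeal Y J ∧ IsHIdeal Y J ∧ I ≤ J :=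
  ⟨hClosure Y I, hClosure_ne_top hprime h0 hA hsing, isStrongHIdeal_hClosure _,
    (isStrongHIdeal_hClosure _).isHIdeal, subset_hClosure _⟩

/-- if `R` is reduced, `k(Y) = ⟨0⟩` and `R` satisfies property `A`,
then every ideal consisting of zero-divisors is contained in a proper strong
`ℋ_Y`-ideal (hence in a proper `ℋ_Y`-ideal). -/
theorem stmt18 {R : Type*} [CommRing R] [IsReduced R] (Y : Set (Ideal R))
    (hprime : ∀ P ∈ Y, P.IsPrime) (h0 : kSet Y = ⊥)
    (hA : ∀ J : Ideal R, J.FG → (∀ a ∈ J, ∃ b : R, b ≠ 0 ∧ a * b = 0) →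
      ∃ c : R, c ≠ 0 ∧ ∀ a ∈ J, a * c = 0)
    (I : Ideal R) (hsing : ∀ a ∈ I, ∃ b : R, b ≠ 0 ∧ a * b = 0) :
    ∃ J : Ideal R, J ≠ ⊤ ∧ IsStrongHIdeal Y J ∧ IsHIdeal Y J ∧ I ≤ J :=
  stmt18_general Y hprime h0 hA I hsing
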